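/- Let K = ℚ(√D) with D ≥ 2 squarefree and (β_j) the ordered sequence of indecomposables with v_jβ_j = β_{j-1} + β_{j+1}. For α = 3β_j: if v_j ≥ 4 then p_K(α) = 3; if v_j = 3 then p_K(α) = 4; if v_j = 2 and v_{j-1} > 2 and v_{j+1} > 2 then p_K(α) = 6; and if v_j = 2 and (v_{j-1} = 2 or v_{j+1} = 2) then p_K(α) ≥ 8. -/

import Mathlib

noncomputable section

/-- `ω_D`: the standard generator of the ring of integers of `ℚ(√D)`. -/
def omegaD (D : ℕ) : ℝ := if D % 4 = 1 then (1 + Real.sqrt D) / 2 else Real.sqrt D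

/-- The Galois conjugate of `ω_D`. -/
def omegaD' (D : ℕ) : ℝ := if D % 4 = 1 then (1 - Real.sqrt D) / 2 else -Real.sqrt D

/-- Elements of `O_K` in coordinates: `(x, y)` represents `x + y·ω_D`. -/
abbrev OK : Type := ℤ × ℤ

/-- First real embedding. -/
def emb1 (D : ℕ) (a : OK) : ℝ := a.1 + a.2 * omegaD D

/-- Second real embedding (Galois conjugate). -/
def emb2 (D : ℕ) (a : OK) : ℝ := a.1 + a.2 * omegaD' D

/-- Galois conjugation on `O_K`. -/
def conjOK (D : ℕ) (a : OK) : OK := (a.1 + (if D % 4 = 1 then (1 : ℤ) else 0) * a.2, -a.2)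

/-- Total positivity. -/
def TotPos (D : ℕ) (a : OK) : Prop := 0 < emb1 D a ∧ 0 < emb2 D a

/-- The field norm. -/
def Nm (D : ℕ) (a : OK) : ℝ := emb1 D a * emb2 D a

/-- Indecomposability: totally positive and not a sum of two totally positive elements. -/
def Indec (D : ℕ) (a : OK) : Prop :=
  TotPos D a ∧ ¬ ∃ b c : OK, TotPos D b ∧ TotPos D c ∧ a = b + c

/-- Number of partitions of `α` into indecomposable parts (`p_K(α|I)`). -/
def pKI (D : ℕ) (α : OK) : ℕ :=
  Set.ncard {s : Multiset OK | (∀ x ∈ s, Indec D x) ∧ s.sum = α}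

/-- Number of partitions of `α` into totally positive parts (`p_K(α)`). -/
def pK (D : ℕ) (α : OK) : ℕ :=
  Set.ncard {s : Multiset OK | (∀ x ∈ s, TotPos D x) ∧ s.sum = α}

/-- Discriminant of `ℚ(√D)`. -/
def disc (D : ℕ) : ℕ := if D % 4 = 1 then D else 4 * D

/-- The ordered two-sided sequence of indecomposables together with
the coefficients `v j ≥ 2` from the Hejda–Kala relation `v_j β_j = β_{j-1} + β_{j+1}`. -/
structure BetaSeq (D : ℕ) (β : ℤ → OK) (v : ℤ → ℤ) : Prop where
  indec : ∀ j, Indec D (β j)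
  surj : ∀ a : OK, Indec D a → ∃ j, β j = a
  mono : StrictMono fun j => emb1 D (β j)
  zero : β 0 = (1, 0)
  conj_eq : ∀ j, β (-j) = conjOK D (β j)
  v_two_le : ∀ j, 2 ≤ v j
  v_symm : ∀ j, v (-j) = v j
  rel : ∀ j, v j • β j = β (j - 1) + β (j + 1)

/-- The continued fraction data of `ω_D = [⌈u₀/2⌉, \overline{u₁, …, u_s}]` (with `u_s = u_0`),
with tails `γ_0 = ω_D`, `γ_i = [u_i, u_{i+1}, …]` for `i ≥ 1`. -/
structure CFData (D : ℕ) (u : ℕ → ℕ) (γ : ℕ → ℝ) : Prop where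
  gamma_zero : γ 0 = omegaD D
  u_zero : (u 0 : ℤ) = 2 * ⌊omegaD D⌋ - (if D % 4 = 1 then 1 else 0)
  head : omegaD D = (⌊omegaD D⌋ : ℝ) + 1 / γ 1
  step : ∀ i, 1 ≤ i → γ i = u i + 1 / γ (i + 1)
  one_lt : ∀ i, 1 ≤ i → 1 < γ i
  floor_eq : ∀ i, 1 ≤ i → (u i : ℤ) = ⌊γ i⌋
  period : ∃ s, 1 ≤ s ∧ u s = u 0 ∧ ∀ i, 1 ≤ i → u (i + s) = u i

/-- The convergents `α_i = p_i + q_i ξ_D`, indexed by `i ≥ -1`. -/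
structure ConvData (D : ℕ) (u : ℕ → ℕ) (a : ℤ → OK) : Prop where
  neg_one : a (-1) = (1, 0)
  zero : a 0 = (⌊omegaD D⌋, 0) + (if D % 4 = 1 then ((-1 : ℤ), (1 : ℤ)) else (0, 1))
  recur : ∀ i : ℤ, -1 ≤ i → a (i + 2) = (u (i + 2).toNat : ℤ) • a (i + 1) + a i

/-- Semiconvergents `α_{i,r} = α_i + r·α_{i+1}`. -/
def semiconv (a : ℤ → OK) (i r : ℤ) : OK := a i + r • a (i + 1)

/-!
Every partition of `α` into totally positive parts arises from a partition into indecomposables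
by grouping its parts, so `p_K(α)` counts the distinct groupings of the indecomposable partitions
of `α`. Let `L k` and `M k` be the coordinate sum and the second coordinate of `β k` in the basis
`β j, β (j + 1)`. Both satisfy `w (k - 1) + w (k + 1) = v k * w k`, which with `v ≥ 2` makes them
convex: `L ≥ 1` everywhere, `M k` has the sign of `k - j`, and `|M k| ≥ |k - j|`. An
indecomposable partition of `3 β j` has `∑ L = 3` and `∑ M = 0`, which leaves only
`β j + β j + β j`, `β (j - 1) + β (j + 1)` (when `v j = 3`) and `β (j - 1) + β j + β (j + 1)`
(when `v j = 2 < v (j ± 1)`). The groupings are then counted in the coordinates `ℤ²`, where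
equality of multisets is decidable; for the lower bound, `β (j - 2)` or `β (j + 2)` supplies a
third indecomposable partition.
-/

variable {D : ℕ}

section Embeddings

variable (D)

def emb1Hom : OK →+ ℝ :=
  AddMonoidHom.mk' (emb1 D) fun a b => by
    simp only [emb1, Prod.fst_add, Prod.snd_add]; push_cast; ring

def emb2Hom : OK →+ ℝ :=
  AddMonoidHom.mk' (emb2 D) fun a b => by
    simp only [emb2, Prod.fst_add, Prod.snd_add]; push_cast; ring

/-- The trace of `a₀ + a₁ ω_D` is `2 a₀ + a₁ (ω_D + ω_D')`, and `ω_D + ω_D'` is `1` or `0`. -/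
def trace : OK →+ ℤ :=
  AddMonoidHom.mk' (fun a => 2 * a.1 + (if D % 4 = 1 then 1 else 0) * a.2) fun a b => by
    simp only [Prod.fst_add, Prod.snd_add]; ring

@[simp] lemma emb1Hom_apply (a : OK) : emb1Hom D a = emb1 D a := rfl

@[simp] lemma emb2Hom_apply (a : OK) : emb2Hom D a = emb2 D a := rfl

@[simp] lemma emb1_add (a b : OK) : emb1 D (a + b) = emb1 D a + emb1 D b := map_add (emb1Hom D) a b

@[simp] lemma emb2_add (a b : OK) : emb2 D (a + b) = emb2 D a + emb2 D b := map_add (emb2Hom D) a b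

lemma omegaD_add_omegaD' : omegaD D + omegaD' D = if D % 4 = 1 then 1 else 0 := by
  unfold omegaD omegaD'; split_ifs <;> ring

lemma one_le_omegaD_sub_omegaD' (hD : 1 ≤ D) : 1 ≤ omegaD D - omegaD' D := by
  have : (1 : ℝ) ≤ Real.sqrt D := Real.one_le_sqrt.mpr (by exact_mod_cast hD)
  unfold omegaD omegaD'; split_ifs <;> linarith

lemma trace_eq (a : OK) : (trace D a : ℝ) = emb1 D a + emb2 D a := by
  have h := omegaD_add_omegaD' D
  simp only [trace, AddMonoidHom.mk'_apply, emb1, emb2]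
  split_ifs at h ⊢ <;> push_cast <;> linear_combination (-(a.2 : ℝ)) * h

lemma emb1_conjOK (a : OK) : emb1 D (conjOK D a) = emb2 D a := by
  have h := omegaD_add_omegaD' D
  simp only [conjOK, emb1, emb2]
  split_ifs at h ⊢ <;> push_cast <;> linear_combination (-(a.2 : ℝ)) * h

end Embeddings

lemma TotPos.add {a b : OK} (ha : TotPos D a) (hb : TotPos D b) : TotPos D (a + b) :=
  ⟨by simpa using add_pos ha.1 hb.1, by simpa using add_pos ha.2 hb.2⟩

lemma TotPos.multiset_sum {s : Multiset OK} (hs0 : s ≠ 0) (hs : ∀ x ∈ s, TotPos D x) :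
    TotPos D s.sum := by
  induction s using Multiset.induction_on with
  | empty => exact absurd rfl hs0
  | cons a s ih =>
    rw [Multiset.sum_cons]
    rcases eq_or_ne s 0 with rfl | hs0'
    · simpa using hs a (Multiset.mem_cons_self a 0)
    · exact (hs a (Multiset.mem_cons_self a s)).add
        (ih hs0' fun x hx => hs x (Multiset.mem_cons_of_mem hx))

lemma TotPos.one_le_trace {a : OK} (ha : TotPos D a) : 1 ≤ trace D a := by
  have : (0 : ℝ) < trace D a := by rw [trace_eq]; exact add_pos ha.1 ha.2
  exact_mod_cast this

lemma exists_indec_sum {a : OK} (ha : TotPos D a) :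
    ∃ u : Multiset OK, u ≠ 0 ∧ (∀ x ∈ u, Indec D x) ∧ u.sum = a := by
  obtain ⟨n, hn⟩ : ∃ n, (trace D a).toNat = n := ⟨_, rfl⟩
  induction n using Nat.strong_induction_on generalizing a with
  | _ n ih =>
  by_cases hi : Indec D a
  · exact ⟨{a}, by simp, by simpa using hi, by simp⟩
  obtain ⟨b, c, hb, hc, rfl⟩ : ∃ b c, TotPos D b ∧ TotPos D c ∧ a = b + c := by
    by_contra h; exact hi ⟨ha, h⟩
  have := hb.one_le_trace; have := hc.one_le_trace; have := map_add (trace D) b c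
  obtain ⟨ub, hub0, hub, rfl⟩ := ih _ (by omega) hb rfl
  obtain ⟨uc, -, huc, rfl⟩ := ih _ (by omega) hc rfl
  refine ⟨ub + uc, by simp [hub0], fun x hx => ?_, Multiset.sum_add ub uc⟩
  exact (Multiset.mem_add.mp hx).elim (hub x) (huc x)

lemma finite_totPos_trace_le (hD : 1 ≤ D) (B : ℤ) :
    {x : OK | TotPos D x ∧ trace D x ≤ B}.Finite := by
  refine (Set.finite_Icc (-B, -B) (B, B)).subset ?_
  rintro x ⟨⟨h1, h2⟩, hB⟩
  have hB' : emb1 D x + emb2 D x ≤ B := by rw [← trace_eq]; exact_mod_cast hB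
  have hdiff : emb1 D x - emb2 D x = x.2 * (omegaD D - omegaD' D) := by
    simp only [emb1, emb2]; ring
  have hω := one_le_omegaD_sub_omegaD' D hD
  have hy : |(x.2 : ℝ)| ≤ B := by
    calc |(x.2 : ℝ)| ≤ |(x.2 : ℝ)| * (omegaD D - omegaD' D) :=
          le_mul_of_one_le_right (abs_nonneg _) hω
      _ = |emb1 D x - emb2 D x| := by
          rw [hdiff, abs_mul, abs_of_pos (show 0 < omegaD D - omegaD' D by linarith)]
      _ ≤ B := abs_sub_le_iff.mpr ⟨by linarith, by linarith⟩
  have hy' : |x.2| ≤ B := by exact_mod_cast hy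
  have htr : trace D x = 2 * x.1 + (if D % 4 = 1 then 1 else 0) * x.2 := rfl
  have h1 := TotPos.one_le_trace ⟨h1, h2⟩
  rw [abs_le] at hy'
  simp only [Set.mem_Icc, Prod.le_def]
  split_ifs at htr <;> omega

lemma Multiset.finite_setOf_card_le {α : Type*} {S : Set α} (hS : S.Finite) (n : ℕ) :
    {s : Multiset α | Multiset.card s ≤ n ∧ ∀ x ∈ s, x ∈ S}.Finite := by
  classical
  refine (n • hS.toFinset.val).powerset.toFinset.finite_toSet.subset ?_
  rintro s ⟨hcard, hsS⟩
  simp only [Finset.mem_coe, Multiset.mem_toFinset, Multiset.mem_powerset, Multiset.le_iff_count]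
  intro x
  by_cases hx : x ∈ s
  · rw [Multiset.count_nsmul, Multiset.count_eq_one_of_mem hS.toFinset.nodup
      (hS.mem_toFinset.mpr (hsS x hx)), mul_one]
    exact (Multiset.count_le_card x s).trans hcard
  · simp [Multiset.count_eq_zero_of_notMem hx]

def partitions (D : ℕ) (α : OK) : Set (Multiset OK) :=
  {s | (∀ x ∈ s, TotPos D x) ∧ s.sum = α}

def indecPartitions (D : ℕ) (α : OK) : Set (Multiset OK) :=
  {s | (∀ x ∈ s, Indec D x) ∧ s.sum = α}

lemma finite_partitions (hD : 1 ≤ D) (α : OK) : (partitions D α).Finite := by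
  refine (Multiset.finite_setOf_card_le (finite_totPos_trace_le hD (trace D α))
    (trace D α).toNat).subset ?_
  rintro s ⟨hpos, rfl⟩
  have hone : ∀ y ∈ s.map (trace D), 1 ≤ y := by
    intro y hy
    obtain ⟨x, hx, rfl⟩ := Multiset.mem_map.mp hy
    exact (hpos x hx).one_le_trace
  have hsum : (s.map (trace D)).sum = trace D s.sum := (map_multiset_sum _ s).symm
  refine ⟨?_, fun x hx => ⟨hpos x hx, ?_⟩⟩
  · have := Multiset.card_nsmul_le_sum hone
    simp only [Multiset.card_map, nsmul_eq_mul, mul_one] at this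
    omega
  · rw [← hsum]
    exact Multiset.single_le_sum (fun y hy => zero_le_one.trans (hone y hy)) _
      (Multiset.mem_map_of_mem _ hx)

section Groupings

variable {α β : Type*} [AddCommMonoid α] [AddCommMonoid β]

def groupings (R : Multiset α) : Set (Multiset α) :=
  {s | ∃ t : Multiset (Multiset α), (∀ u ∈ t, u ≠ 0) ∧ t.join = R ∧
    t.map Multiset.sum = s}

lemma groupings_zero : groupings (0 : Multiset α) = {0} := by
  ext s
  refine ⟨?_, fun hs => ⟨0, by simp, by simp, by simp [Set.mem_singleton_iff.mp hs]⟩⟩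
  rintro ⟨t, ht0, htj, rfl⟩
  rcases Multiset.empty_or_exists_mem t with rfl | ⟨u, hu⟩
  · simp
  · obtain ⟨t', rfl⟩ := Multiset.exists_cons_of_mem hu
    rw [Multiset.join_cons, add_eq_zero] at htj
    exact absurd htj.1 (ht0 u hu)

lemma mem_groupings_cons {a : α} {R s : Multiset α} :
    s ∈ groupings (a ::ₘ R) ↔
      (∃ s', s' ∈ groupings R ∧ s = a ::ₘ s') ∨
        ∃ x s', x ::ₘ s' ∈ groupings R ∧ s = (a + x) ::ₘ s' := by
  constructor
  · rintro ⟨t, ht0, htj, rfl⟩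
    obtain ⟨u, hut, hau⟩ := Multiset.mem_join.mp (htj ▸ Multiset.mem_cons_self a R)
    obtain ⟨t', rfl⟩ := Multiset.exists_cons_of_mem hut
    obtain ⟨u', rfl⟩ := Multiset.exists_cons_of_mem hau
    have hR : R = u' + t'.join := by
      simpa [Multiset.join_cons, Multiset.cons_add] using htj.symm
    have ht0' : ∀ w ∈ t', w ≠ 0 := fun w hw => ht0 w (Multiset.mem_cons_of_mem hw)
    rcases eq_or_ne u' 0 with rfl | hu'
    · exact Or.inl ⟨_, ⟨t', ht0', by simpa using hR.symm, rfl⟩, by simp⟩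
    · refine Or.inr ⟨u'.sum, t'.map Multiset.sum, ⟨u' ::ₘ t', ?_, by simp [hR], by simp⟩,
        by simp⟩
      simpa [hu'] using ht0'
  · rintro (⟨s', ⟨t, ht0, rfl, rfl⟩, rfl⟩ | ⟨x, s', ⟨t, ht0, rfl, hts⟩, rfl⟩)
    · exact ⟨{a} ::ₘ t, by simpa using ht0, by simp, by simp⟩
    · obtain ⟨u, hut, rfl⟩ := Multiset.mem_map.mp (hts ▸ Multiset.mem_cons_self x s')
      obtain ⟨t', rfl⟩ := Multiset.exists_cons_of_mem hut
      refine ⟨(a ::ₘ u) ::ₘ t', ?_, by simp [Multiset.join_cons], ?_⟩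
      · simpa using fun w hw => ht0 w (Multiset.mem_cons_of_mem hw)
      · simpa using hts

lemma groupings_singleton (a : α) : groupings {a} = {{a}} := by
  ext s
  rw [← Multiset.cons_zero, mem_groupings_cons, groupings_zero]
  simp

lemma groupings_pair (a b : α) : groupings {a, b} = {{a + b}, {a, b}} := by
  ext s
  rw [Multiset.insert_eq_cons, mem_groupings_cons, groupings_singleton]
  simp [eq_comm (b := ({b} : Multiset α)), Multiset.singleton_eq_cons_iff, or_comm]

lemma Multiset.cons_eq_pair_iff {γ : Type*} {x b c : γ} {s : Multiset γ} :
    x ::ₘ s = b ::ₘ {c} ↔ x = b ∧ s = {c} ∨ x = c ∧ s = {b} := by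
  refine ⟨fun h => ?_, ?_⟩
  · rcases Multiset.cons_eq_cons.mp h with h | ⟨-, cs, rfl, hcs⟩
    · exact Or.inl h
    · obtain ⟨rfl, rfl⟩ := (Multiset.singleton_eq_cons_iff _).mp hcs
      exact Or.inr ⟨rfl, rfl⟩
  · rintro (⟨rfl, rfl⟩ | ⟨rfl, rfl⟩)
    · rfl
    · exact Multiset.cons_swap _ _ _

lemma groupings_triple (a b c : α) :
    groupings {a, b, c} = {{a + (b + c)}, {a, b + c}, {a + b, c}, {a + c, b}, {a, b, c}} := by
  ext s
  rw [Multiset.insert_eq_cons, mem_groupings_cons, groupings_pair]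
  simp [eq_comm (b := ({b + c} : Multiset α)), Multiset.singleton_eq_cons_iff,
    Multiset.cons_eq_pair_iff, or_and_right, exists_or]
  tauto

lemma groupings_map (f : α →+ β) (R : Multiset α) :
    groupings (R.map f) = Multiset.map f '' groupings R := by
  induction R using Multiset.induction_on with
  | empty => simp [groupings_zero]
  | cons a R ih =>
    ext s
    rw [Multiset.map_cons, mem_groupings_cons, ih]
    constructor
    · rintro (⟨_, ⟨r, hr, rfl⟩, rfl⟩ | ⟨x, s', ⟨r, hr, hrs⟩, rfl⟩)
      · exact ⟨a ::ₘ r, mem_groupings_cons.mpr (Or.inl ⟨r, hr, rfl⟩), by simp⟩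
      · obtain ⟨y, hy, rfl⟩ := Multiset.mem_map.mp (hrs ▸ Multiset.mem_cons_self x s')
        obtain ⟨r', rfl⟩ := Multiset.exists_cons_of_mem hy
        rw [Multiset.map_cons, Multiset.cons_inj_right] at hrs
        exact ⟨(a + y) ::ₘ r', mem_groupings_cons.mpr (Or.inr ⟨y, r', hr, rfl⟩),
          by simp [hrs]⟩
    · rintro ⟨r, hr, rfl⟩
      rcases mem_groupings_cons.mp hr with ⟨r', hr', rfl⟩ | ⟨y, r', hr', rfl⟩
      · exact Or.inl ⟨_, ⟨r', hr', rfl⟩, by simp⟩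
      · exact Or.inr ⟨f y, r'.map f, ⟨y ::ₘ r', hr', by simp⟩, by simp⟩

end Groupings

lemma exists_indec_grouping {s : Multiset OK} (hs : ∀ x ∈ s, TotPos D x) :
    ∃ t : Multiset (Multiset OK), (∀ u ∈ t, u ≠ 0 ∧ ∀ x ∈ u, Indec D x) ∧
      t.map Multiset.sum = s := by
  induction s using Multiset.induction_on with
  | empty => exact ⟨0, by simp, rfl⟩
  | cons a s ih =>
    obtain ⟨t, ht, rfl⟩ := ih fun x hx => hs x (Multiset.mem_cons_of_mem hx)
    obtain ⟨u, hu0, hu, rfl⟩ := exists_indec_sum (hs a (Multiset.mem_cons_self a _))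
    refine ⟨u ::ₘ t, fun w hw => ?_, by simp⟩
    rcases Multiset.mem_cons.mp hw with rfl | hw
    exacts [⟨hu0, hu⟩, ht w hw]

lemma partitions_eq_biUnion_groupings (α : OK) :
    partitions D α = ⋃ R ∈ indecPartitions D α, groupings R := by
  ext s
  simp only [Set.mem_iUnion, exists_prop]
  constructor
  · rintro ⟨hs, rfl⟩
    obtain ⟨t, ht, rfl⟩ := exists_indec_grouping hs
    refine ⟨t.join, ⟨fun x hx => ?_, Multiset.sum_join⟩, t, fun u hu => (ht u hu).1, rfl,
      rfl⟩
    obtain ⟨u, hu, hxu⟩ := Multiset.mem_join.mp hx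
    exact (ht u hu).2 x hxu
  · rintro ⟨R, ⟨hR, rfl⟩, t, ht0, rfl, rfl⟩
    refine ⟨fun x hx => ?_, Multiset.sum_join.symm⟩
    obtain ⟨u, hu, rfl⟩ := Multiset.mem_map.mp hx
    exact TotPos.multiset_sum (ht0 u hu) fun y hy =>
      (hR y (Multiset.mem_join.mpr ⟨u, hu, hy⟩)).1

section Counting

variable {M : Type*} [AddCommMonoid M] {f : M →+ OK} {α : OK} {Q : Set (Multiset M)}

lemma pK_eq_ncard_biUnion_groupings (hf : Function.Injective f)
    (hQ : indecPartitions D α = Multiset.map f '' Q) :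
    pK D α = (⋃ R ∈ Q, groupings R).ncard := by
  change (partitions D α).ncard = _
  rw [partitions_eq_biUnion_groupings, hQ, Set.biUnion_image]
  simp_rw [groupings_map]
  rw [← Set.image_iUnion₂, Set.ncard_image_of_injective _ (Multiset.map_injective hf)]

lemma ncard_biUnion_groupings_le_pK (hD : 1 ≤ D) (hf : Function.Injective f)
    (hQ : Multiset.map f '' Q ⊆ indecPartitions D α) :
    (⋃ R ∈ Q, groupings R).ncard ≤ pK D α := by
  rw [← Set.ncard_image_of_injective _ (Multiset.map_injective hf), Set.image_iUnion₂]
  simp_rw [← groupings_map]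
  change _ ≤ (partitions D α).ncard
  refine Set.ncard_le_ncard ?_ (finite_partitions hD α)
  rw [partitions_eq_biUnion_groupings]
  exact Set.iUnion₂_subset fun R hR =>
    Set.subset_biUnion_of_mem (u := groupings) (hQ (Set.mem_image_of_mem _ hR))

end Counting

section Coordinates

variable (D)

def embDet (x y : OK) : ℝ := emb1 D x * emb2 D y - emb1 D y * emb2 D x

/-- The coordinates with respect to `x, y`, by Cramer's rule in the embedding `OK → ℝ²`. -/
def coord₁ (x y : OK) : OK →+ ℝ :=
  (embDet D x y)⁻¹ • (emb2 D y • emb1Hom D - emb1 D y • emb2Hom D)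

def coord₂ (x y : OK) : OK →+ ℝ :=
  (embDet D x y)⁻¹ • (emb1 D x • emb2Hom D - emb2 D x • emb1Hom D)

def basisHom (x y : OK) : ℤ × ℤ →+ OK := (zmultiplesHom OK x).coprod (zmultiplesHom OK y)

variable {D} {x y : OK}

lemma basisHom_apply (p : ℤ × ℤ) : basisHom x y p = p.1 • x + p.2 • y := rfl

lemma basisHom_one_zero : basisHom x y (1, 0) = x := by simp [basisHom_apply]

lemma basisHom_zero_one : basisHom x y (0, 1) = y := by simp [basisHom_apply]

lemma coord₁_apply (z : OK) :
    coord₁ D x y z = (emb2 D y * emb1 D z - emb1 D y * emb2 D z) / embDet D x y := by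
  simp only [coord₁, AddMonoidHom.smul_apply, AddMonoidHom.sub_apply, emb1Hom_apply,
    emb2Hom_apply, smul_eq_mul]
  ring

lemma coord₂_apply (z : OK) :
    coord₂ D x y z = (emb1 D x * emb2 D z - emb2 D x * emb1 D z) / embDet D x y := by
  simp only [coord₂, AddMonoidHom.smul_apply, AddMonoidHom.sub_apply, emb1Hom_apply,
    emb2Hom_apply, smul_eq_mul]
  ring

lemma coord₁_left (h : embDet D x y ≠ 0) : coord₁ D x y x = 1 := by
  rw [coord₁_apply, div_eq_one_iff_eq h, embDet]; ring

lemma coord₁_right : coord₁ D x y y = 0 := by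
  rw [coord₁_apply, div_eq_zero_iff]; left; ring

lemma coord₂_left : coord₂ D x y x = 0 := by
  rw [coord₂_apply, div_eq_zero_iff]; left; ring

lemma coord₂_right (h : embDet D x y ≠ 0) : coord₂ D x y y = 1 := by
  rw [coord₂_apply, div_eq_one_iff_eq h, embDet]; ring

lemma basisHom_injective (h : embDet D x y ≠ 0) : Function.Injective (basisHom x y) := by
  intro p q hpq
  have h₁ := congrArg (coord₁ D x y) hpq
  have h₂ := congrArg (coord₂ D x y) hpq
  simp only [basisHom_apply, map_add, map_zsmul] at h₁ h₂
  simp only [coord₁_left h, coord₁_right, coord₂_left, coord₂_right h, zsmul_eq_mul, mul_one,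
    mul_zero, add_zero, zero_add, Int.cast_inj] at h₁ h₂
  exact Prod.ext h₁ h₂

end Coordinates

section Recurrence

def SatisfiesRec (v : ℤ → ℤ) (W : ℤ → ℝ) : Prop := ∀ k, W (k - 1) + W (k + 1) = v k * W k

variable {v : ℤ → ℤ} {W : ℤ → ℝ} {δ : ℝ} {m : ℤ}

lemma SatisfiesRec.comp_neg (hW : SatisfiesRec v W) :
    SatisfiesRec (fun k => v (-k)) (fun k => W (-k)) := by
  intro k
  dsimp only
  rw [show -(k - 1) = -k + 1 by ring, show -(k + 1) = -k - 1 by ring, add_comm]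
  exact hW (-k)

/-- Where `W ≥ 0`, the recurrence with `v ≥ 2` makes `W` convex, so increments can only grow. -/
lemma SatisfiesRec.nonneg_and_add_le_succ (hv : ∀ k, 2 ≤ v k) (hW : SatisfiesRec v W)
    (hδ : 0 ≤ δ) (h0 : 0 ≤ W m) (h1 : W m + δ ≤ W (m + 1)) {n : ℤ} (hmn : m ≤ n) :
    0 ≤ W n ∧ W n + δ ≤ W (n + 1) := by
  induction n, hmn using Int.leInduction with
  | base => exact ⟨h0, h1⟩
  | succ n _ ih =>
    have hWn1 : 0 ≤ W (n + 1) := by linarith [ih.1, ih.2]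
    have hrec := hW (n + 1)
    rw [add_sub_cancel_right] at hrec
    have hv' : (2 : ℝ) ≤ v (n + 1) := by exact_mod_cast hv (n + 1)
    exact ⟨hWn1, by nlinarith [ih.2]⟩

lemma SatisfiesRec.add_mul_le (hv : ∀ k, 2 ≤ v k) (hW : SatisfiesRec v W) (hδ : 0 ≤ δ)
    (h0 : 0 ≤ W m) (h1 : W m + δ ≤ W (m + 1)) {n k : ℤ} (hmn : m ≤ n) (hnk : n ≤ k) :
    W n + (k - n) * δ ≤ W k := by
  induction k, hnk using Int.leInduction with
  | base => simp
  | succ k hnk ih =>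
    have := (hW.nonneg_and_add_le_succ hv hδ h0 h1 (hmn.trans hnk)).2
    push_cast
    linarith

lemma SatisfiesRec.add_mul_le_backward (hv : ∀ k, 2 ≤ v k) (hW : SatisfiesRec v W)
    (hδ : 0 ≤ δ) (h0 : 0 ≤ W m) (h1 : W m + δ ≤ W (m - 1)) {n k : ℤ} (hkn : k ≤ n)
    (hnm : n ≤ m) :
    W n + (n - k) * δ ≤ W k := by
  have := hW.comp_neg.add_mul_le (fun k => hv (-k)) hδ (m := -m) (by simpa using h0)
    (by simpa [show -(-m + 1) = m - 1 by ring] using h1) (n := -n) (k := -k) (by omega) (by omega)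
  simp only [neg_neg, Int.cast_neg] at this
  linarith

end Recurrence

/-- The conditions satisfied by the coordinate sum `L k` and the second coordinate `M k` of `β k`
in the basis `β j, β (j + 1)`. -/
structure CoordSeqs (v : ℤ → ℤ) (j : ℤ) (L M : ℤ → ℝ) : Prop where
  two_le : ∀ k, 2 ≤ v k
  recL : SatisfiesRec v L
  recM : SatisfiesRec v M
  L_self : L j = 1
  L_succ : L (j + 1) = 1
  M_self : M j = 0
  M_succ : M (j + 1) = 1

namespace CoordSeqs

variable {v : ℤ → ℤ} {j : ℤ} {L M : ℤ → ℝ} {k : ℤ}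

lemma L_pred (h : CoordSeqs v j L M) : L (j - 1) = v j - 1 := by
  have := h.recL j; rw [h.L_self, h.L_succ] at this; linarith

lemma M_pred (h : CoordSeqs v j L M) : M (j - 1) = -1 := by
  have := h.recM j; rw [h.M_self, h.M_succ] at this; linarith

lemma monotoneOn_L (h : CoordSeqs v j L M) : MonotoneOn L (Set.Ici j) := fun n hn k _ hnk => by
  simpa using h.recL.add_mul_le h.two_le le_rfl (by rw [h.L_self]; norm_num)
    (by rw [h.L_self, h.L_succ]; norm_num) hn hnk

lemma antitoneOn_L (h : CoordSeqs v j L M) : AntitoneOn L (Set.Iic j) := fun k _ n hn hkn => by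
  have hv : (2 : ℝ) ≤ v j := by exact_mod_cast h.two_le j
  simpa using h.recL.add_mul_le_backward h.two_le le_rfl (by rw [h.L_self]; norm_num)
    (by rw [h.L_self, h.L_pred]; linarith) hkn hn

lemma one_le_L (h : CoordSeqs v j L M) (k : ℤ) : 1 ≤ L k := by
  rcases le_total j k with hjk | hkj
  · simpa [h.L_self] using h.monotoneOn_L (le_refl j) hjk hjk
  · simpa [h.L_self] using h.antitoneOn_L hkj (le_refl j) hkj

lemma le_L_of_lt (h : CoordSeqs v j L M) (hk : k < j) : v j - 1 ≤ L k := by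
  simpa [h.L_pred] using
    h.antitoneOn_L (show k ≤ j by omega) (show j - 1 ≤ j by omega) (show k ≤ j - 1 by omega)

lemma le_L_of_le_sub_two (h : CoordSeqs v j L M) (hk : k ≤ j - 2) :
    v (j - 1) * (v j - 1) - 1 ≤ L k := by
  have h2 := h.recL (j - 1)
  rw [show j - 1 - 1 = j - 2 by ring, sub_add_cancel, h.L_self, h.L_pred] at h2
  have := h.antitoneOn_L (show k ≤ j by omega) (show j - 2 ≤ j by omega) hk
  linarith

lemma le_L_of_add_two_le (h : CoordSeqs v j L M) (hk : j + 2 ≤ k) : v (j + 1) - 1 ≤ L k := by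
  have h2 := h.recL (j + 1)
  rw [add_sub_cancel_right, show j + 1 + 1 = j + 2 by ring, h.L_self, h.L_succ] at h2
  have := h.monotoneOn_L (show j ≤ j + 2 by omega) (show j ≤ k by omega) hk
  linarith

lemma sub_le_M (h : CoordSeqs v j L M) (hk : j ≤ k) : (k : ℝ) - j ≤ M k := by
  simpa [h.M_self] using h.recM.add_mul_le h.two_le zero_le_one (by rw [h.M_self])
    (by rw [h.M_self, h.M_succ]; norm_num) le_rfl hk

lemma M_le_sub (h : CoordSeqs v j L M) (hk : k ≤ j) : M k ≤ k - j := by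
  have hrec : SatisfiesRec v (fun k => -M k) := fun k => by
    have := h.recM k; simp only; linarith
  have := hrec.add_mul_le_backward h.two_le zero_le_one (m := j) (by simp [h.M_self])
    (by simp [h.M_self, h.M_pred]) hk le_rfl
  simp only [h.M_self] at this
  linarith

lemma eq_of_M_eq_zero (h : CoordSeqs v j L M) (hk : M k = 0) : k = j := by
  rcases le_total j k with hjk | hkj
  · have : (k : ℝ) ≤ j := by linarith [h.sub_le_M hjk]
    exact le_antisymm (by exact_mod_cast this) hjk
  · have : (j : ℝ) ≤ k := by linarith [h.M_le_sub hkj]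
    exact le_antisymm hkj (by exact_mod_cast this)

lemma card_le_sum_L (h : CoordSeqs v j L M) (K : Multiset ℤ) :
    (Multiset.card K : ℝ) ≤ (K.map L).sum := by
  simpa using Multiset.card_nsmul_le_sum (s := K.map L) (a := 1)
    (by simpa using fun k _ => h.one_le_L k)

lemma eq_zero_of_sum_L_lt_one (h : CoordSeqs v j L M) {K : Multiset ℤ} (hK : (K.map L).sum < 1) :
    K = 0 :=
  Multiset.card_eq_zero.mp (Nat.lt_one_iff.mp (by exact_mod_cast (h.card_le_sum_L K).trans_lt hK))

lemma sum_L_nonneg (h : CoordSeqs v j L M) (K : Multiset ℤ) : 0 ≤ (K.map L).sum :=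
  Multiset.sum_nonneg (by simpa using fun k _ => zero_le_one.trans (h.one_le_L k))

variable {K : Multiset ℤ}

/-- A negative second coordinate has to be balanced by a positive one. -/
lemma eq_replicate_or_exists_cons_cons (h : CoordSeqs v j L M) (hL : (K.map L).sum = 3)
    (hM : (K.map M).sum = 0) :
    K = Multiset.replicate 3 j ∨
      ∃ k₁ k₂ K', k₁ < j ∧ j < k₂ ∧ K = k₁ ::ₘ k₂ ::ₘ K' := by
  by_cases hK : ∀ k ∈ K, j ≤ k
  · left
    have hM0 := Multiset.all_zero_of_le_zero_le_of_sum_eq_zero (s := K.map M)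
      (by simpa using fun k hk => by linarith [h.sub_le_M (hK k hk),
        (show (j : ℝ) ≤ k by exact_mod_cast hK k hk)]) hM
    have hKj : K = Multiset.replicate (Multiset.card K) j :=
      Multiset.eq_replicate_card.mpr fun k hk =>
        h.eq_of_M_eq_zero (hM0 _ (Multiset.mem_map_of_mem M hk))
    rw [hKj, Multiset.map_replicate, Multiset.sum_replicate, h.L_self, nsmul_eq_mul, mul_one]
      at hL
    rw [hKj, show Multiset.card K = 3 by exact_mod_cast hL]
  · right
    obtain ⟨k₁, hk₁, hlt⟩ : ∃ k ∈ K, k < j := by simpa using hK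
    obtain ⟨K₁, rfl⟩ := Multiset.exists_cons_of_mem hk₁
    obtain ⟨k₂, hk₂, hgt⟩ : ∃ k₂ ∈ K₁, j < k₂ := by
      by_contra! hle
      have hK₁ : (K₁.map M).sum ≤ 0 := by
        refine (Multiset.sum_map_le_sum_map M (fun _ => 0) fun k hk => ?_).trans (by simp)
        linarith [h.M_le_sub (hle k hk), (show (k : ℝ) ≤ j by exact_mod_cast hle k hk)]
      have : (k₁ : ℝ) + 1 ≤ j := by exact_mod_cast hlt
      rw [Multiset.map_cons, Multiset.sum_cons] at hM
      linarith [h.M_le_sub hlt.le]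
    obtain ⟨K', rfl⟩ := Multiset.exists_cons_of_mem hk₂
    exact ⟨k₁, k₂, K', hlt, hgt, rfl⟩

lemma eq_replicate_of_four_le (h : CoordSeqs v j L M) (hL : (K.map L).sum = 3)
    (hM : (K.map M).sum = 0) (hv : 4 ≤ v j) : K = Multiset.replicate 3 j := by
  refine (h.eq_replicate_or_exists_cons_cons hL hM).resolve_right ?_
  rintro ⟨k₁, k₂, K', hk₁, -, rfl⟩
  simp only [Multiset.map_cons, Multiset.sum_cons] at hL
  have : (4 : ℝ) ≤ v j := by exact_mod_cast hv
  linarith [h.le_L_of_lt hk₁, h.one_le_L k₂, h.sum_L_nonneg K']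

lemma eq_replicate_or_eq_pair (h : CoordSeqs v j L M) (hL : (K.map L).sum = 3)
    (hM : (K.map M).sum = 0) (hv : v j = 3) :
    K = Multiset.replicate 3 j ∨ K = {j - 1, j + 1} := by
  refine (h.eq_replicate_or_exists_cons_cons hL hM).imp_right ?_
  rintro ⟨k₁, k₂, K', hk₁, hk₂, rfl⟩
  simp only [Multiset.map_cons, Multiset.sum_cons] at hL hM
  have hv' : (v j : ℝ) = 3 := by exact_mod_cast hv
  have hL₁ := h.le_L_of_lt hk₁
  have hL₂ := h.one_le_L k₂
  obtain rfl : K' = 0 := h.eq_zero_of_sum_L_lt_one (by linarith)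
  simp only [Multiset.map_zero, Multiset.sum_zero, add_zero] at hL hM
  obtain rfl : k₁ = j - 1 := by
    by_contra hne
    have := h.le_L_of_le_sub_two (k := k₁) (by omega)
    have : (2 : ℝ) ≤ v (j - 1) := by exact_mod_cast h.two_le (j - 1)
    nlinarith
  obtain rfl : k₂ = j + 1 := by
    by_contra hne
    have := h.sub_le_M hk₂.le
    have : (j : ℝ) + 2 ≤ k₂ := by exact_mod_cast (show j + 2 ≤ k₂ by omega)
    rw [h.M_pred] at hM
    linarith
  rfl

lemma eq_replicate_or_eq_triple (h : CoordSeqs v j L M) (hL : (K.map L).sum = 3)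
    (hM : (K.map M).sum = 0) (hv : v j = 2) (hl : 2 < v (j - 1)) (hr : 2 < v (j + 1)) :
    K = Multiset.replicate 3 j ∨ K = {j - 1, j, j + 1} := by
  refine (h.eq_replicate_or_exists_cons_cons hL hM).imp_right ?_
  rintro ⟨k₁, k₂, K', hk₁, hk₂, rfl⟩
  simp only [Multiset.map_cons, Multiset.sum_cons] at hL hM
  have hv' : (v j : ℝ) = 2 := by exact_mod_cast hv
  have hl' : (3 : ℝ) ≤ v (j - 1) := by exact_mod_cast hl
  have hr' : (3 : ℝ) ≤ v (j + 1) := by exact_mod_cast hr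
  have hK' := h.sum_L_nonneg K'
  have hL₁ := h.one_le_L k₁
  have hL₂ := h.one_le_L k₂
  obtain rfl : k₁ = j - 1 := by
    by_contra hne
    have := h.le_L_of_le_sub_two (k := k₁) (by omega)
    rw [hv'] at this
    obtain rfl : K' = 0 := h.eq_zero_of_sum_L_lt_one (by linarith)
    simp only [Multiset.map_zero, Multiset.sum_zero, add_zero] at hL hM
    obtain rfl : k₂ = j + 1 := by
      by_contra hne'
      linarith [h.le_L_of_add_two_le (k := k₂) (by omega)]
    have : (k₁ : ℝ) + 2 ≤ j := by exact_mod_cast (show k₁ + 2 ≤ j by omega)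
    rw [h.M_succ] at hM
    linarith [h.M_le_sub hk₁.le]
  obtain rfl : k₂ = j + 1 := by
    by_contra hne
    have := h.le_L_of_add_two_le (k := k₂) (by omega)
    obtain rfl : K' = 0 := h.eq_zero_of_sum_L_lt_one (by linarith)
    have : (j : ℝ) + 2 ≤ k₂ := by exact_mod_cast (show j + 2 ≤ k₂ by omega)
    simp only [Multiset.map_zero, Multiset.sum_zero, add_zero, h.M_pred] at hM
    linarith [h.sub_le_M hk₂.le]
  rw [h.L_pred, h.L_succ] at hL
  rw [h.M_pred, h.M_succ] at hM
  obtain ⟨k₃, rfl⟩ : ∃ k₃, K' = {k₃} := by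
    refine Multiset.card_eq_one.mp (le_antisymm ?_ (Multiset.card_pos.mpr ?_))
    · have := h.card_le_sum_L K'
      exact_mod_cast (show (Multiset.card K' : ℝ) ≤ 1 by linarith)
    · rintro rfl; simp at hL; linarith
  simp only [Multiset.map_singleton, Multiset.sum_singleton] at hM
  obtain rfl := h.eq_of_M_eq_zero (show M k₃ = 0 by linarith)
  exact congrArg _ (Multiset.cons_swap _ _ _)

end CoordSeqs

namespace BetaSeq

variable {β : ℤ → OK} {v : ℤ → ℤ}

lemma emb2_eq (hβ : BetaSeq D β v) (k : ℤ) : emb2 D (β k) = emb1 D (β (-k)) := by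
  rw [hβ.conj_eq, emb1_conjOK]

lemma embDet_neg (hβ : BetaSeq D β v) (j : ℤ) : embDet D (β j) (β (j + 1)) < 0 := by
  have h1 : emb1 D (β j) < emb1 D (β (j + 1)) := hβ.mono (by omega)
  have h2 : emb2 D (β (j + 1)) < emb2 D (β j) := by
    rw [hβ.emb2_eq, hβ.emb2_eq]; exact hβ.mono (by omega)
  have p1 := (hβ.indec j).1.1
  have p2 := (hβ.indec (j + 1)).1.2
  unfold embDet; nlinarith

lemma injective_basisHom (hβ : BetaSeq D β v) (j : ℤ) :
    Function.Injective (basisHom (β j) (β (j + 1))) :=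
  basisHom_injective (hβ.embDet_neg j).ne

lemma basisHom_pred (hβ : BetaSeq D β v) (j : ℤ) :
    basisHom (β j) (β (j + 1)) (v j, -1) = β (j - 1) := by
  rw [basisHom_apply]
  linear_combination (norm := module) hβ.rel j

lemma basisHom_add_two (hβ : BetaSeq D β v) (j : ℤ) :
    basisHom (β j) (β (j + 1)) (-1, v (j + 1)) = β (j + 2) := by
  have := hβ.rel (j + 1)
  rw [add_sub_cancel_right, show j + 1 + 1 = j + 2 by ring] at this
  rw [basisHom_apply]
  linear_combination (norm := module) this

lemma basisHom_sub_two (hβ : BetaSeq D β v) (j : ℤ) :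
    basisHom (β j) (β (j + 1)) (v (j - 1) * v j - 1, -v (j - 1)) = β (j - 2) := by
  have := hβ.rel (j - 1)
  rw [show j - 1 - 1 = j - 2 by ring, sub_add_cancel] at this
  rw [basisHom_apply]
  linear_combination (norm := module) this + v (j - 1) • hβ.rel j

lemma satisfiesRec_map (hβ : BetaSeq D β v) (φ : OK →+ ℝ) :
    SatisfiesRec v fun k => φ (β k) := fun k => by
  rw [← map_add, ← hβ.rel, map_zsmul, zsmul_eq_mul]

lemma coordSeqs (hβ : BetaSeq D β v) (j : ℤ) :
    CoordSeqs v j (fun k => (coord₁ D (β j) (β (j + 1)) + coord₂ D (β j) (β (j + 1))) (β k))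
      (fun k => coord₂ D (β j) (β (j + 1)) (β k)) := by
  have hdet := (hβ.embDet_neg j).ne
  exact
    { two_le := hβ.v_two_le
      recL := hβ.satisfiesRec_map _
      recM := hβ.satisfiesRec_map _
      L_self := by simp [coord₁_left hdet, coord₂_left]
      L_succ := by simp [coord₁_right, coord₂_right hdet]
      M_self := coord₂_left
      M_succ := coord₂_right hdet }

lemma exists_map_eq (hβ : BetaSeq D β v) {R : Multiset OK} (hR : ∀ x ∈ R, Indec D x) :
    ∃ K : Multiset ℤ, K.map β = R := by
  induction R using Multiset.induction_on with
  | empty => exact ⟨0, rfl⟩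
  | cons a R ih =>
    obtain ⟨K, rfl⟩ := ih fun x hx => hR x (Multiset.mem_cons_of_mem hx)
    obtain ⟨k, rfl⟩ := hβ.surj a (hR a (Multiset.mem_cons_self a _))
    exact ⟨k ::ₘ K, Multiset.map_cons _ _ _⟩

lemma exists_indices_of_mem_indecPartitions (hβ : BetaSeq D β v) {j : ℤ} {R : Multiset OK}
    (hR : R ∈ indecPartitions D ((3 : ℤ) • β j)) :
    ∃ K : Multiset ℤ, K.map β = R ∧
      (K.map fun k => (coord₁ D (β j) (β (j + 1)) + coord₂ D (β j) (β (j + 1))) (β k)).sum = 3 ∧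
      (K.map fun k => coord₂ D (β j) (β (j + 1)) (β k)).sum = 0 := by
  obtain ⟨hind, hsum⟩ := hR
  obtain ⟨K, rfl⟩ := hβ.exists_map_eq hind
  have hφ (φ : OK →+ ℝ) : (K.map fun k => φ (β k)).sum = 3 * φ (β j) := by
    rw [← Function.comp_def, ← Multiset.map_map, ← map_multiset_sum, hsum, map_zsmul,
      zsmul_eq_mul, Int.cast_ofNat]
  refine ⟨K, rfl, ?_, ?_⟩
  · rw [hφ, show _ = (1 : ℝ) from (hβ.coordSeqs j).L_self, mul_one]
  · rw [hφ, show _ = (0 : ℝ) from (hβ.coordSeqs j).M_self, mul_zero]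

variable {j : ℤ}

lemma replicate_mem_indecPartitions (hβ : BetaSeq D β v) :
    {β j, β j, β j} ∈ indecPartitions D ((3 : ℤ) • β j) :=
  ⟨by simp [hβ.indec], by simp only [Multiset.insert_eq_cons, Multiset.sum_cons,
    Multiset.sum_singleton]; module⟩

lemma pair_mem_indecPartitions (hβ : BetaSeq D β v) (hv : v j = 3) :
    {β (j - 1), β (j + 1)} ∈ indecPartitions D ((3 : ℤ) • β j) :=
  ⟨by simp [hβ.indec], by simpa [hv] using (hβ.rel j).symm⟩

lemma triple_mem_indecPartitions (hβ : BetaSeq D β v) (hv : v j = 2) :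
    {β (j - 1), β j, β (j + 1)} ∈ indecPartitions D ((3 : ℤ) • β j) := by
  refine ⟨by simp [hβ.indec], ?_⟩
  have := hβ.rel j
  rw [hv] at this
  simp only [Multiset.insert_eq_cons, Multiset.sum_cons, Multiset.sum_singleton]
  linear_combination (norm := module) -this

lemma sub_two_mem_indecPartitions (hβ : BetaSeq D β v) (hv : v j = 2) (hl : v (j - 1) = 2) :
    {β (j - 2), β (j + 1), β (j + 1)} ∈ indecPartitions D ((3 : ℤ) • β j) := by
  refine ⟨by simp [hβ.indec], ?_⟩
  have h₁ := hβ.rel (j - 1)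
  rw [hl, show j - 1 - 1 = j - 2 by ring, sub_add_cancel] at h₁
  have h₂ := hβ.rel j
  rw [hv] at h₂
  simp only [Multiset.insert_eq_cons, Multiset.sum_cons, Multiset.sum_singleton]
  linear_combination (norm := module) -h₁ - (2 : ℤ) • h₂

lemma add_two_mem_indecPartitions (hβ : BetaSeq D β v) (hv : v j = 2) (hr : v (j + 1) = 2) :
    {β (j - 1), β (j - 1), β (j + 2)} ∈ indecPartitions D ((3 : ℤ) • β j) := by
  refine ⟨by simp [hβ.indec], ?_⟩
  have h₁ := hβ.rel (j + 1)
  rw [hr, add_sub_cancel_right, show j + 1 + 1 = j + 2 by ring] at h₁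
  have h₂ := hβ.rel j
  rw [hv] at h₂
  simp only [Multiset.insert_eq_cons, Multiset.sum_cons, Multiset.sum_singleton]
  linear_combination (norm := module) -h₁ - (2 : ℤ) • h₂

lemma indecPartitions_three_smul_of_four_le (hβ : BetaSeq D β v) (hv : 4 ≤ v j) :
    indecPartitions D ((3 : ℤ) • β j) = {{β j, β j, β j}} := by
  refine Set.Subset.antisymm (fun R hR => ?_) (by simpa using hβ.replicate_mem_indecPartitions)
  obtain ⟨K, rfl, hL, hM⟩ := hβ.exists_indices_of_mem_indecPartitions hR
  rw [(hβ.coordSeqs j).eq_replicate_of_four_le hL hM hv]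
  rfl

lemma indecPartitions_three_smul_of_eq_three (hβ : BetaSeq D β v) (hv : v j = 3) :
    indecPartitions D ((3 : ℤ) • β j) = {{β j, β j, β j}, {β (j - 1), β (j + 1)}} := by
  refine Set.Subset.antisymm (fun R hR => ?_) (Set.insert_subset_iff.mpr
    ⟨hβ.replicate_mem_indecPartitions,
      Set.singleton_subset_iff.mpr (hβ.pair_mem_indecPartitions hv)⟩)
  obtain ⟨K, rfl, hL, hM⟩ := hβ.exists_indices_of_mem_indecPartitions hR
  rcases (hβ.coordSeqs j).eq_replicate_or_eq_pair hL hM hv with rfl | rfl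
  exacts [Or.inl rfl, Or.inr rfl]

lemma indecPartitions_three_smul_of_eq_two (hβ : BetaSeq D β v) (hv : v j = 2)
    (hl : 2 < v (j - 1)) (hr : 2 < v (j + 1)) :
    indecPartitions D ((3 : ℤ) • β j) =
      {{β j, β j, β j}, {β (j - 1), β j, β (j + 1)}} := by
  refine Set.Subset.antisymm (fun R hR => ?_) (Set.insert_subset_iff.mpr
    ⟨hβ.replicate_mem_indecPartitions,
      Set.singleton_subset_iff.mpr (hβ.triple_mem_indecPartitions hv)⟩)
  obtain ⟨K, rfl, hL, hM⟩ := hβ.exists_indices_of_mem_indecPartitions hR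
  rcases (hβ.coordSeqs j).eq_replicate_or_eq_triple hL hM hv hl hr with rfl | rfl
  exacts [Or.inl rfl, Or.inr rfl]

lemma pK_three_smul_of_four_le (hβ : BetaSeq D β v) (hv : 4 ≤ v j) :
    pK D ((3 : ℤ) • β j) = 3 := by
  rw [pK_eq_ncard_biUnion_groupings (hβ.injective_basisHom j) (Q := {{(1, 0), (1, 0), (1, 0)}})]
  · rw [Set.biUnion_singleton, groupings_triple]
    simp only [← Finset.coe_insert, ← Finset.coe_singleton, Set.ncard_coe_finset]
    decide
  · rw [hβ.indecPartitions_three_smul_of_four_le hv]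
    simp [basisHom_one_zero]

lemma pK_three_smul_of_eq_three (hβ : BetaSeq D β v) (hv : v j = 3) :
    pK D ((3 : ℤ) • β j) = 4 := by
  have ha : basisHom (β j) (β (j + 1)) (3, -1) = β (j - 1) := hv ▸ hβ.basisHom_pred j
  rw [pK_eq_ncard_biUnion_groupings (hβ.injective_basisHom j)
    (Q := {{(1, 0), (1, 0), (1, 0)}, {(3, -1), (0, 1)}})]
  · rw [Set.biUnion_insert, Set.biUnion_singleton, groupings_triple, groupings_pair]
    simp only [← Finset.coe_insert, ← Finset.coe_singleton, ← Finset.coe_union,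
      Set.ncard_coe_finset]
    decide
  · rw [hβ.indecPartitions_three_smul_of_eq_three hv]
    simp [Set.image_insert_eq, basisHom_one_zero, basisHom_zero_one, ha]

lemma pK_three_smul_of_eq_two (hβ : BetaSeq D β v) (hv : v j = 2) (hl : 2 < v (j - 1))
    (hr : 2 < v (j + 1)) : pK D ((3 : ℤ) • β j) = 6 := by
  have ha : basisHom (β j) (β (j + 1)) (2, -1) = β (j - 1) := hv ▸ hβ.basisHom_pred j
  rw [pK_eq_ncard_biUnion_groupings (hβ.injective_basisHom j)
    (Q := {{(1, 0), (1, 0), (1, 0)}, {(2, -1), (1, 0), (0, 1)}})]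
  · rw [Set.biUnion_insert, Set.biUnion_singleton, groupings_triple, groupings_triple]
    simp only [← Finset.coe_insert, ← Finset.coe_singleton, ← Finset.coe_union,
      Set.ncard_coe_finset]
    decide
  · rw [hβ.indecPartitions_three_smul_of_eq_two hv hl hr]
    simp [Set.image_insert_eq, basisHom_one_zero, basisHom_zero_one, ha]

lemma eight_le_pK_three_smul_of_pred (hβ : BetaSeq D β v) (hD : 1 ≤ D) (hv : v j = 2)
    (hl : v (j - 1) = 2) : 8 ≤ pK D ((3 : ℤ) • β j) := by
  have ha : basisHom (β j) (β (j + 1)) (2, -1) = β (j - 1) := hv ▸ hβ.basisHom_pred j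
  have he : basisHom (β j) (β (j + 1)) (3, -2) = β (j - 2) := by
    simpa [hl, hv] using hβ.basisHom_sub_two j
  calc 8 = (⋃ R ∈ ({{(1, 0), (1, 0), (1, 0)}, {(2, -1), (1, 0), (0, 1)},
        {(3, -2), (0, 1), (0, 1)}} : Set (Multiset (ℤ × ℤ))), groupings R).ncard := by
        rw [Set.biUnion_insert, Set.biUnion_insert, Set.biUnion_singleton, groupings_triple,
          groupings_triple, groupings_triple]
        simp only [← Finset.coe_insert, ← Finset.coe_singleton, ← Finset.coe_union,
          Set.ncard_coe_finset]
        decide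
    _ ≤ pK D ((3 : ℤ) • β j) := by
        refine ncard_biUnion_groupings_le_pK hD (hβ.injective_basisHom j) ?_
        simp only [Set.image_insert_eq, Set.image_singleton, Multiset.insert_eq_cons,
          Multiset.map_cons, Multiset.map_singleton, basisHom_one_zero, basisHom_zero_one, ha,
          he, Set.insert_subset_iff, Set.singleton_subset_iff]
        exact ⟨hβ.replicate_mem_indecPartitions, hβ.triple_mem_indecPartitions hv,
          hβ.sub_two_mem_indecPartitions hv hl⟩

lemma eight_le_pK_three_smul_of_succ (hβ : BetaSeq D β v) (hD : 1 ≤ D) (hv : v j = 2)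
    (hr : v (j + 1) = 2) : 8 ≤ pK D ((3 : ℤ) • β j) := by
  have ha : basisHom (β j) (β (j + 1)) (2, -1) = β (j - 1) := hv ▸ hβ.basisHom_pred j
  have hd : basisHom (β j) (β (j + 1)) (-1, 2) = β (j + 2) := hr ▸ hβ.basisHom_add_two j
  calc 8 = (⋃ R ∈ ({{(1, 0), (1, 0), (1, 0)}, {(2, -1), (1, 0), (0, 1)},
        {(2, -1), (2, -1), (-1, 2)}} : Set (Multiset (ℤ × ℤ))), groupings R).ncard := by
        rw [Set.biUnion_insert, Set.biUnion_insert, Set.biUnion_singleton, groupings_triple,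
          groupings_triple, groupings_triple]
        simp only [← Finset.coe_insert, ← Finset.coe_singleton, ← Finset.coe_union,
          Set.ncard_coe_finset]
        decide
    _ ≤ pK D ((3 : ℤ) • β j) := by
        refine ncard_biUnion_groupings_le_pK hD (hβ.injective_basisHom j) ?_
        simp only [Set.image_insert_eq, Set.image_singleton, Multiset.insert_eq_cons,
          Multiset.map_cons, Multiset.map_singleton, basisHom_one_zero, basisHom_zero_one, ha,
          hd, Set.insert_subset_iff, Set.singleton_subset_iff]
        exact ⟨hβ.replicate_mem_indecPartitions, hβ.triple_mem_indecPartitions hv,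
          hβ.add_two_mem_indecPartitions hv hr⟩

end BetaSeq

theorem stmt14_general (D : ℕ) (hD : 2 ≤ D)
    (β : ℤ → OK) (v : ℤ → ℤ) (hβ : BetaSeq D β v)
    (j : ℤ) (α : OK) (hα : α = (3 : ℤ) • β j) :
    (4 ≤ v j → pK D α = 3) ∧
    (v j = 3 → pK D α = 4) ∧
    (v j = 2 → 2 < v (j - 1) → 2 < v (j + 1) → pK D α = 6) ∧
    (v j = 2 → (v (j - 1) = 2 ∨ v (j + 1) = 2) → 8 ≤ pK D α) := by
  subst hα
  refine ⟨hβ.pK_three_smul_of_four_le, hβ.pK_three_smul_of_eq_three, hβ.pK_three_smul_of_eq_two,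
    fun hv hlr => hlr.elim ?_ ?_⟩
  exacts [hβ.eight_le_pK_three_smul_of_pred (by omega) hv,
    hβ.eight_le_pK_three_smul_of_succ (by omega) hv]

/-- the number of partitions of `3β_j`. -/
theorem stmt14 (D : ℕ) (hD : 2 ≤ D) (hsq : Squarefree D)
    (β : ℤ → OK) (v : ℤ → ℤ) (hβ : BetaSeq D β v)
    (j : ℤ) (α : OK) (hα : α = (3 : ℤ) • β j) :
    (4 ≤ v j → pK D α = 3) ∧
    (v j = 3 → pK D α = 4) ∧
    (v j = 2 → 2 < v (j - 1) → 2 < v (j + 1) → pK D α = 6) ∧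
    (v j = 2 → (v (j - 1) = 2 ∨ v (j + 1) = 2) → 8 ≤ pK D α) :=
  stmt14_general D hD β v hβ j α hα
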